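/- arXiv:2009.02607 — 3 statements merged into one kernel-verified Lean document; each statement's English description precedes it below -/
import Mathlib

section
/- Let X be a Hilbert space, M a normed space, b : X × M → ℝ a bounded bilinear form, X_h ⊆ X and M_h ⊆ M finite-dimensional subspaces such that b restricted to X_h × M_h satisfies the discrete inf-sup condition with constant β_h > 0. Then for every w ∈ X there exists a unique P̃_h w ∈ V_h^⊥ ∩ X_h (V_h the discrete kernel of b in X_h, orthogonal complement taken in X_h) with b(P̃_h w, μ) = b(w − Π_h w, μ) for all μ ∈ M_h, and ‖P̃_h w‖_X ≤ (‖b‖/β_h)·‖w − Π_h w‖_X, where Π_h is the orthogonal projection onto X_h. -/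
/-!
Let `a(v, μ) := b(v, μ)` on `X_h × M_h` and let `R μ ∈ X_h` be the Riesz representative of
`a(·, μ)`, so that the inf-sup condition reads `β_h ‖μ‖ ≤ ‖R μ‖`. The map `ν ↦ a(R ν, ·)` from
`M_h` to its dual is injective, since `a(R ν, ν) = ‖R ν‖²`, hence bijective, so some `p = R ν`
solves `a(p, ·) = b(w - Π_h w, ·)`. Such a `p` is orthogonal to the kernel `V_h` of `a`, and
`‖p‖² = b(w - Π_h w, ν) ≤ ‖b‖ ‖w - Π_h w‖ ‖R ν‖ / β_h`. Uniqueness holds because `a` is injective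
on `V_hᗮ`.
-/

open InnerProductSpace

theorem LinearMap.injOn_orthogonal_ker {𝕜 E G : Type*} [RCLike 𝕜] [NormedAddCommGroup E]
    [InnerProductSpace 𝕜 E] [AddCommGroup G] [Module 𝕜 G] (f : E →ₗ[𝕜] G) :
    Set.InjOn f (LinearMap.ker f)ᗮ := by
  intro p hp q hq hpq
  have hmem : p - q ∈ LinearMap.ker f ⊓ (LinearMap.ker f)ᗮ :=
    ⟨by simp [hpq], Submodule.sub_mem _ hp hq⟩
  rw [Submodule.inf_orthogonal_eq_bot, Submodule.mem_bot] at hmem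
  exact sub_eq_zero.mp hmem

section rieszRepr

variable {E F : Type*} [NormedAddCommGroup E] [InnerProductSpace ℝ E] [CompleteSpace E]
  [NormedAddCommGroup F] [NormedSpace ℝ F]

noncomputable def rieszRepr (a : E →L[ℝ] F →L[ℝ] ℝ) : F →ₗ[ℝ] E where
  toFun μ := (toDual ℝ E).symm (a.flip μ)
  map_add' := by simp
  map_smul' := by simp

variable (a : E →L[ℝ] F →L[ℝ] ℝ)

theorem inner_rieszRepr (μ : F) (v : E) : ⟪rieszRepr a μ, v⟫_ℝ = a v μ :=
  toDual_symm_apply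

theorem norm_rieszRepr (μ : F) : ‖rieszRepr a μ‖ = ‖a.flip μ‖ :=
  (toDual ℝ E).symm.norm_map _

theorem apply_rieszRepr_self (ν : F) : a (rieszRepr a ν) ν = ‖rieszRepr a ν‖ ^ 2 := by
  rw [← inner_rieszRepr, real_inner_self_eq_norm_sq]

theorem rieszRepr_mem_orthogonal_ker (ν : F) :
    rieszRepr a ν ∈ (LinearMap.ker (a : E →ₗ[ℝ] F →L[ℝ] ℝ))ᗮ := by
  rw [Submodule.mem_orthogonal']
  intro u hu
  rw [inner_rieszRepr, show a u = 0 from LinearMap.mem_ker.mp hu, zero_apply]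

variable {a} {β : ℝ}

theorem exists_apply_rieszRepr_eq [FiniteDimensional ℝ F] (hβ : 0 < β)
    (hinfsup : ∀ μ, β * ‖μ‖ ≤ ‖a.flip μ‖) (g : Module.Dual ℝ F) :
    ∃ ν, ∀ μ, a (rieszRepr a ν) μ = g μ := by
  let T : F →ₗ[ℝ] Module.Dual ℝ F :=
    (ContinuousLinearMap.coeLM ℝ).comp ((a : E →ₗ[ℝ] F →L[ℝ] ℝ).comp (rieszRepr a))
  have hT : Function.Injective T := by
    rw [← LinearMap.ker_eq_bot, Submodule.eq_bot_iff]
    intro ν hν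
    have hR : rieszRepr a ν = 0 := by
      have h := LinearMap.congr_fun hν ν
      simpa [T, apply_rieszRepr_self] using h
    have : β * ‖ν‖ ≤ 0 := by simpa [← norm_rieszRepr, hR] using hinfsup ν
    exact norm_le_zero_iff.mp (nonpos_of_mul_nonpos_right this hβ)
  obtain ⟨ν, hν⟩ :=
    (LinearMap.injective_iff_surjective_of_finrank_eq_finrank Subspace.dual_finrank_eq.symm).mp
      hT g
  exact ⟨ν, fun μ => LinearMap.congr_fun hν μ⟩

theorem mul_norm_rieszRepr_le {ν : F} {C : ℝ} (hβ : 0 ≤ β) (hC : 0 ≤ C)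
    (hlow : β * ‖ν‖ ≤ ‖a.flip ν‖) (hν : a (rieszRepr a ν) ν ≤ C * ‖ν‖) :
    β * ‖rieszRepr a ν‖ ≤ C := by
  rw [← norm_rieszRepr] at hlow
  have hsq : β * ‖rieszRepr a ν‖ ^ 2 ≤ C * ‖rieszRepr a ν‖ := by
    rw [← apply_rieszRepr_self]
    calc β * a (rieszRepr a ν) ν ≤ β * (C * ‖ν‖) := mul_le_mul_of_nonneg_left hν hβ
      _ = C * (β * ‖ν‖) := by ring
      _ ≤ C * ‖rieszRepr a ν‖ := mul_le_mul_of_nonneg_left hlow hC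
  rcases (norm_nonneg (rieszRepr a ν)).eq_or_lt with h0 | hpos
  · rw [← h0, mul_zero]; exact hC
  · nlinarith

end rieszRepr

theorem sSup_div_norm_le_opNorm_comp_subtypeL {X : Type*} [NormedAddCommGroup X]
    [NormedSpace ℝ X] (f : X →L[ℝ] ℝ) (K : Submodule ℝ X) :
    sSup {r : ℝ | ∃ v ∈ K, v ≠ 0 ∧ r = f v / ‖v‖} ≤ ‖f.comp K.subtypeL‖ := by
  refine Real.sSup_le ?_ (by positivity)
  rintro r ⟨v, hv, hv0, rfl⟩
  rw [div_le_iff₀ (norm_pos_iff.mpr hv0)]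
  exact (le_abs_self _).trans ((f.comp K.subtypeL).le_opNorm ⟨v, hv⟩)

theorem mem_orthogonal_ker_bilinearComp_subtypeL_iff {X M : Type*} [NormedAddCommGroup X]
    [InnerProductSpace ℝ X] [NormedAddCommGroup M] [NormedSpace ℝ M]
    (b : X →L[ℝ] M →L[ℝ] ℝ) (Xh : Submodule ℝ X) (Mh : Submodule ℝ M) (p : Xh) :
    p ∈ (LinearMap.ker
        (b.bilinearComp Xh.subtypeL Mh.subtypeL : Xh →ₗ[ℝ] Mh →L[ℝ] ℝ))ᗮ ↔
      ∀ v ∈ Xh, (∀ μ ∈ Mh, b v μ = 0) → ⟪(p : X), v⟫_ℝ = 0 := by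
  rw [Submodule.mem_orthogonal']
  constructor
  · intro h v hv hker
    exact h ⟨v, hv⟩ (ContinuousLinearMap.ext fun μ => hker μ μ.2)
  · intro h v hv
    exact h v v.2 fun μ hμ => congrArg (fun f => f ⟨μ, hμ⟩) (LinearMap.mem_ker.mp hv)

theorem exists_unique_discrete_infsup_correction_general
    {X M : Type*} [NormedAddCommGroup X] [InnerProductSpace ℝ X]
    [NormedAddCommGroup M] [NormedSpace ℝ M]
    (b : X →L[ℝ] M →L[ℝ] ℝ)
    (Xh : Submodule ℝ X) (Mh : Submodule ℝ M)
    [FiniteDimensional ℝ Xh] [FiniteDimensional ℝ Mh]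
    (βh : ℝ) (hβh : 0 < βh)
    (hinfsup : ∀ μ ∈ Mh, βh * ‖μ‖ ≤ sSup {r : ℝ | ∃ v ∈ Xh, v ≠ 0 ∧ r = b v μ / ‖v‖})
    (w : X) :
    ∃ p : X,
      (p ∈ Xh ∧
        (∀ v ∈ Xh, (∀ μ ∈ Mh, b v μ = 0) → inner (𝕜 := ℝ) p v = (0 : ℝ)) ∧
        (∀ μ ∈ Mh, b p μ = b (w - (Submodule.orthogonalProjectionOnto Xh w : X)) μ)) ∧
      ‖p‖ ≤ (‖b‖ / βh) * ‖w - (Submodule.orthogonalProjectionOnto Xh w : X)‖ ∧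
      ∀ q : X,
        (q ∈ Xh ∧
          (∀ v ∈ Xh, (∀ μ ∈ Mh, b v μ = 0) → inner (𝕜 := ℝ) q v = (0 : ℝ)) ∧
          (∀ μ ∈ Mh, b q μ = b (w - (Submodule.orthogonalProjectionOnto Xh w : X)) μ)) → q = p := by
  set r := w - (Submodule.orthogonalProjectionOnto Xh w : X)
  set a := b.bilinearComp Xh.subtypeL Mh.subtypeL
  have hinf (μ : Mh) : βh * ‖μ‖ ≤ ‖a.flip μ‖ :=
    (hinfsup μ μ.2).trans (sSup_div_norm_le_opNorm_comp_subtypeL (b.flip μ) Xh)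
  obtain ⟨ν, hν⟩ := exists_apply_rieszRepr_eq hβh hinf ((b r).comp Mh.subtypeL).toLinearMap
  have hsolves (μ : M) (hμ : μ ∈ Mh) : b (rieszRepr a ν) μ = b r μ := hν ⟨μ, hμ⟩
  refine ⟨rieszRepr a ν, ⟨(rieszRepr a ν).2,
    (mem_orthogonal_ker_bilinearComp_subtypeL_iff b Xh Mh _).mp
      (rieszRepr_mem_orthogonal_ker a ν), hsolves⟩, ?_, ?_⟩
  · have hrν : a (rieszRepr a ν) ν ≤ ‖b‖ * ‖r‖ * ‖ν‖ :=
      (hν ν).trans_le ((le_abs_self _).trans (b.le_opNorm₂ r ν))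
    rw [div_mul_eq_mul_div, le_div_iff₀' hβh]
    exact mul_norm_rieszRepr_le hβh.le (by positivity) (hinf ν) hrν
  · rintro q ⟨hq, hqorth, hqsolves⟩
    have hqp : (⟨q, hq⟩ : Xh) = rieszRepr a ν :=
      LinearMap.injOn_orthogonal_ker (a : Xh →ₗ[ℝ] Mh →L[ℝ] ℝ)
        ((mem_orthogonal_ker_bilinearComp_subtypeL_iff b Xh Mh _).mpr hqorth)
        (rieszRepr_mem_orthogonal_ker a ν)
        (ContinuousLinearMap.ext fun μ => (hqsolves μ μ.2).trans (hsolves μ μ.2).symm)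
    exact congrArg Subtype.val hqp

open Metric in
/-- Under the discrete inf-sup condition for the bounded bilinear
form `b` on `X_h × M_h`, for every `w ∈ X` there exists a unique
`P̃_h w ∈ X_h`, orthogonal (within `X_h`) to the discrete kernel `V_h`, with
`b(P̃_h w, μ) = b(w − Π_h w, μ)` for all `μ ∈ M_h`, and
`‖P̃_h w‖ ≤ (‖b‖/β_h)·‖w − Π_h w‖`. -/
theorem exists_unique_discrete_infsup_correction
    {X M : Type*} [NormedAddCommGroup X] [InnerProductSpace ℝ X] [CompleteSpace X]
    [NormedAddCommGroup M] [NormedSpace ℝ M]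
    (b : X →L[ℝ] M →L[ℝ] ℝ)
    (Xh : Submodule ℝ X) (Mh : Submodule ℝ M)
    [FiniteDimensional ℝ Xh] [FiniteDimensional ℝ Mh]
    (βh : ℝ) (hβh : 0 < βh)
    (hinfsup : ∀ μ ∈ Mh, βh * ‖μ‖ ≤ sSup {r : ℝ | ∃ v ∈ Xh, v ≠ 0 ∧ r = b v μ / ‖v‖})
    (w : X) :
    ∃ p : X,
      (p ∈ Xh ∧
        (∀ v ∈ Xh, (∀ μ ∈ Mh, b v μ = 0) → inner (𝕜 := ℝ) p v = (0 : ℝ)) ∧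
        (∀ μ ∈ Mh, b p μ = b (w - (Submodule.orthogonalProjectionOnto Xh w : X)) μ)) ∧
      ‖p‖ ≤ (‖b‖ / βh) * ‖w - (Submodule.orthogonalProjectionOnto Xh w : X)‖ ∧
      ∀ q : X,
        (q ∈ Xh ∧
          (∀ v ∈ Xh, (∀ μ ∈ Mh, b v μ = 0) → inner (𝕜 := ℝ) q v = (0 : ℝ)) ∧
          (∀ μ ∈ Mh, b q μ = b (w - (Submodule.orthogonalProjectionOnto Xh w : X)) μ)) → q = p :=
  exists_unique_discrete_infsup_correction_general b Xh Mh βh hβh hinfsup w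
end

section
/- Let f : [0,T] → Z be continuously differentiable into a Banach space Z and let t_k = kΔt be a uniform partition with NΔt = T. Then Δt·∑_{n=1}^N ‖∫_0^{t_n} f(t)dt − Δt·∑_{k=1}^n f(t_k)‖_Z² ≤ T²·(Δt)²·∫_0^T ‖f'(t)‖_Z² dt, i.e., the right-endpoint quadrature error is first order in Δt in this discrete norm. -/
/-!
On a cell `[a, b]` the right-endpoint rule errs by `∫ (f t - f b)`, and `‖f t - f b‖ ≤ ∫ₐᵇ ‖f'‖`,
so the local error is at most `(b - a) ∫ₐᵇ ‖f'‖`. Summing over cells, every partial error is at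
most `Δt ∫₀ᵀ ‖f'‖`, and Cauchy–Schwarz `(∫₀ᵀ ‖f'‖)² ≤ T ∫₀ᵀ ‖f'‖²` bounds each of the `N` squared
errors by `Δt² T ∫₀ᵀ ‖f'‖²`; finally `Δt N = T`.
-/

open Finset intervalIntegral Filter
open MeasureTheory (volume)

theorem sq_intervalIntegral_le_mul_intervalIntegral_sq {g : ℝ → ℝ} {a b : ℝ} (hab : a ≤ b)
    (hg : IntervalIntegrable g volume a b)
    (hg2 : IntervalIntegrable (fun x => g x ^ 2) volume a b) :
    (∫ x in a..b, g x) ^ 2 ≤ (b - a) * ∫ x in a..b, g x ^ 2 := by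
  set I := ∫ x in a..b, g x
  set J := ∫ x in a..b, g x ^ 2
  -- `c ↦ ∫ (g - c)²` is a nonnegative quadratic, so its discriminant is nonpositive.
  have hquad : ∀ c : ℝ, 0 ≤ (b - a) * (c * c) + (-2 * I) * c + J := by
    intro c
    have hexpand : ∫ x in a..b, (g x - c) ^ 2 = (b - a) * (c * c) + (-2 * I) * c + J := by
      have : (fun x => (g x - c) ^ 2) = fun x => g x ^ 2 - 2 * c * g x + c ^ 2 := by
        funext x; ring
      rw [this, integral_add (hg2.sub (hg.const_mul _)) intervalIntegrable_const,
        integral_sub hg2 (hg.const_mul _), integral_const_mul, integral_const, smul_eq_mul]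
      ring
    exact hexpand ▸ integral_nonneg hab fun x _ => sq_nonneg _
  have hdiscrim := discrim_le_zero hquad
  rw [discrim] at hdiscrim
  linarith

section

variable {E : Type*} [NormedAddCommGroup E] [NormedSpace ℝ E] [CompleteSpace E]

theorem norm_sub_le_intervalIntegral_norm_deriv {f f' : ℝ → E} {a b t : ℝ}
    (hf : ContinuousOn f (Set.Icc a b)) (hf_deriv : ∀ x ∈ Set.Ioo a b, HasDerivAt f (f' x) x)
    (hf' : IntervalIntegrable f' volume a b) (ht : t ∈ Set.Icc a b) :
    ‖f t - f b‖ ≤ ∫ x in a..b, ‖f' x‖ := by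
  have hsub : Set.uIcc t b ⊆ Set.uIcc a b :=
    Set.uIcc_subset_uIcc (Set.mem_uIcc_of_le ht.1 ht.2) Set.right_mem_uIcc
  have hftc : ∫ x in t..b, f' x = f b - f t :=
    integral_eq_sub_of_hasDerivAt_of_le ht.2 (hf.mono (Set.Icc_subset_Icc_left ht.1))
      (fun x hx => hf_deriv x (Set.Ioo_subset_Ioo_left ht.1 hx)) (hf'.mono_set hsub)
  calc ‖f t - f b‖ = ‖∫ x in t..b, f' x‖ := by rw [hftc, norm_sub_rev]
    _ ≤ ∫ x in t..b, ‖f' x‖ := norm_integral_le_integral_norm ht.2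
    _ ≤ ∫ x in a..b, ‖f' x‖ :=
      integral_mono_interval ht.1 ht.2 le_rfl (Eventually.of_forall fun _ => norm_nonneg _)
        hf'.norm

theorem norm_intervalIntegral_sub_smul_right_le {f f' : ℝ → E} {a b : ℝ} (hab : a ≤ b)
    (hf : ContinuousOn f (Set.Icc a b)) (hf_deriv : ∀ x ∈ Set.Ioo a b, HasDerivAt f (f' x) x)
    (hf' : IntervalIntegrable f' volume a b) :
    ‖(∫ x in a..b, f x) - (b - a) • f b‖ ≤ (b - a) * ∫ x in a..b, ‖f' x‖ := by
  have hfi : IntervalIntegrable f volume a b :=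
    (hf.mono (Set.uIcc_of_le hab).subset).intervalIntegrable
  rw [← integral_const, ← integral_sub hfi intervalIntegrable_const,
    ← abs_of_nonneg (sub_nonneg.2 hab), mul_comm]
  exact norm_integral_le_of_norm_le_const fun t ht =>
    norm_sub_le_intervalIntegral_norm_deriv hf hf_deriv hf'
      (Set.Ioc_subset_Icc_self (Set.uIoc_of_le hab ▸ ht))

theorem norm_intervalIntegral_sub_rightEndpointSum_le {f f' : ℝ → E} {h : ℝ} (hh : 0 ≤ h)
    (hf : ∀ t, HasDerivAt f (f' t) t) (hf' : ∀ a b, IntervalIntegrable f' volume a b) (n : ℕ) :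
    ‖(∫ t in (0 : ℝ)..(n * h), f t) - h • ∑ k ∈ Icc 1 n, f (k * h)‖
      ≤ h * ∫ t in (0 : ℝ)..(n * h), ‖f' t‖ := by
  induction n with
  | zero => simp
  | succ n ih =>
    have hfc : Continuous f := continuous_iff_continuousAt.2 fun t => (hf t).continuousAt
    have hstep : ((n + 1 : ℕ) : ℝ) * h - n * h = h := by push_cast; ring
    have hlast := norm_intervalIntegral_sub_smul_right_le (by linarith)
      (fun t _ => (hf t).continuousAt.continuousWithinAt) (fun t _ => hf t)
      (hf' (n * h) ((n + 1 : ℕ) * h))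
    rw [hstep] at hlast
    rw [sum_Icc_succ_top (by omega), smul_add,
      ← integral_add_adjacent_intervals (hfc.intervalIntegrable 0 (n * h))
        (hfc.intervalIntegrable _ _),
      ← integral_add_adjacent_intervals (hf' 0 (n * h)).norm (hf' _ _).norm, mul_add,
      add_sub_add_comm]
    exact (norm_add_le _ _).trans (add_le_add ih hlast)

end

open Finset in
theorem right_endpoint_quadrature_error_general
    {Z : Type*} [NormedAddCommGroup Z] [NormedSpace ℝ Z] [CompleteSpace Z]
    (f : ℝ → Z) (T Δt : ℝ) (N : ℕ)
    (hΔt : 0 < Δt) (hT : (N : ℝ) * Δt = T)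
    (hf : ContDiff ℝ 1 f) :
    Δt * ∑ n ∈ Icc 1 N,
        ‖(∫ t in (0 : ℝ)..(n * Δt), f t) - Δt • ∑ k ∈ Icc 1 n, f (k * Δt)‖ ^ 2
      ≤ T ^ 2 * Δt ^ 2 * ∫ t in (0 : ℝ)..T, ‖deriv f t‖ ^ 2 := by
  have hT0 : 0 ≤ T := hT ▸ by positivity
  have hf' : Continuous (deriv f) := hf.continuous_deriv le_rfl
  have hderiv : ∀ t, HasDerivAt f (deriv f t) t :=
    fun t => (hf.differentiable one_ne_zero t).hasDerivAt
  have hsq : (∫ t in (0 : ℝ)..T, ‖deriv f t‖) ^ 2 ≤ T * ∫ t in (0 : ℝ)..T, ‖deriv f t‖ ^ 2 := by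
    simpa using sq_intervalIntegral_le_mul_intervalIntegral_sq hT0
      (hf'.norm.intervalIntegrable 0 T) ((hf'.norm.pow 2).intervalIntegrable 0 T)
  have herror : ∀ n ∈ Icc 1 N,
      ‖(∫ t in (0 : ℝ)..(n * Δt), f t) - Δt • ∑ k ∈ Icc 1 n, f (k * Δt)‖ ^ 2
        ≤ Δt ^ 2 * (T * ∫ t in (0 : ℝ)..T, ‖deriv f t‖ ^ 2) := by
    intro n hn
    have hnT : (n : ℝ) * Δt ≤ T := hT ▸ by gcongr; exact_mod_cast (mem_Icc.1 hn).2
    calc _ ≤ (Δt * ∫ t in (0 : ℝ)..T, ‖deriv f t‖) ^ 2 := by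
          gcongr
          refine (norm_intervalIntegral_sub_rightEndpointSum_le hΔt.le hderiv
            (hf'.intervalIntegrable · ·) n).trans ?_
          gcongr
          exact integral_mono_interval le_rfl (by positivity) hnT
            (Eventually.of_forall fun _ => norm_nonneg _) (hf'.norm.intervalIntegrable 0 T)
      _ ≤ _ := by rw [mul_pow]; gcongr
  calc _ ≤ Δt * (N * (Δt ^ 2 * (T * ∫ t in (0 : ℝ)..T, ‖deriv f t‖ ^ 2))) := by
        gcongr
        simpa using sum_le_card_nsmul _ _ _ herror
    _ = _ := by rw [← hT]; ring

open Finset in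
/-- For `f ∈ C¹([0,T];Z)` with `Z` a Banach space and the uniform
partition `t_k = kΔt`, `NΔt = T`, the right-endpoint quadrature errors satisfy
`Δt·∑_{n=1}^N ‖∫_0^{t_n} f − Δt∑_{k=1}^n f(t_k)‖² ≤ T²(Δt)²∫_0^T ‖f'‖²`. -/
theorem right_endpoint_quadrature_error
    {Z : Type*} [NormedAddCommGroup Z] [NormedSpace ℝ Z] [CompleteSpace Z]
    (f : ℝ → Z) (T Δt : ℝ) (N : ℕ) (hN : 0 < N)
    (hΔt : 0 < Δt) (hT : (N : ℝ) * Δt = T)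
    (hf : ContDiff ℝ 1 f) :
    Δt * ∑ n ∈ Icc 1 N,
        ‖(∫ t in (0 : ℝ)..(n * Δt), f t) - Δt • ∑ k ∈ Icc 1 n, f (k * Δt)‖ ^ 2
      ≤ T ^ 2 * Δt ^ 2 * ∫ t in (0 : ℝ)..T, ‖deriv f t‖ ^ 2 :=
  right_endpoint_quadrature_error_general f T Δt N hΔt hT hf
end

section
/- Let X_h ⊆ X, M_h ⊆ M be finite-dimensional with b satisfying the discrete inf-sup condition with constant β_h, and let L ∈ X' satisfy ⟨L, v⟩ = 0 for all v ∈ V_h (the discrete kernel). Then there exists a unique λ̃_h ∈ M_h with b(v, λ̃_h) = ⟨L, v⟩ for all v ∈ X_h, and ‖λ̃_h‖_M ≤ (1/β_h)·‖L|_{X_h}‖. -/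
/-!
The inf-sup condition says that `q ↦ b(·, q)|_{X_h}` is injective on `M_h`, with an inverse of
norm at most `1/β_h`; this gives uniqueness and the norm bound at once. Existence is finite
dimensional linear algebra: `V_h` is the annihilator of the range of `q ↦ b(·, q)|_{X_h}` in
`X_h'`, and since `X_h` is finite dimensional every functional vanishing on `V_h` lies in that
range.
-/

open LinearMap

theorem LinearMap.mem_range_flip_of_ker_le {K V W : Type*} [Field K] [AddCommGroup V]
    [Module K V] [FiniteDimensional K V] [AddCommGroup W] [Module K W]
    (B : V →ₗ[K] W →ₗ[K] K) {φ : Module.Dual K V} (h : ker B ≤ ker φ) :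
    φ ∈ range B.flip := by
  rw [← Subspace.dualCoannihilator_dualAnnihilator_eq (W := range B.flip),
    dualCoannihilator_range_eq_ker_flip, flip_flip, Submodule.mem_dualAnnihilator]
  exact fun v hv ↦ h hv

section InfSup

variable {X M : Type*} [NormedAddCommGroup X] [NormedSpace ℝ X]
  [NormedAddCommGroup M] [NormedSpace ℝ M]

/-- The discrete dual norm `‖f|_{X_h}‖ = sup_{v ∈ X_h, v ≠ 0} f v / ‖v‖`
(junk value `0` when `X_h = ⊥`, as then the supremum is over `∅`). -/
noncomputable def restrictedDualNorm (Xh : Submodule ℝ X) (f : X → ℝ) : ℝ :=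
  sSup {r : ℝ | ∃ v ∈ Xh, v ≠ 0 ∧ r = f v / ‖v‖}

theorem restrictedDualNorm_congr {Xh : Submodule ℝ X} {f g : X → ℝ}
    (h : ∀ v ∈ Xh, f v = g v) : restrictedDualNorm Xh f = restrictedDualNorm Xh g := by
  unfold restrictedDualNorm
  congr! 3 with r
  exact exists_congr fun v ↦ and_congr_right fun hv ↦ by rw [h v hv]

theorem restrictedDualNorm_eq_zero {Xh : Submodule ℝ X} {f : X → ℝ}
    (h : ∀ v ∈ Xh, f v = 0) : restrictedDualNorm Xh f = 0 := by
  have hzero : ∀ r ∈ {r : ℝ | ∃ v ∈ Xh, v ≠ 0 ∧ r = f v / ‖v‖}, r = 0 := by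
    rintro r ⟨v, hv, -, rfl⟩
    rw [h v hv, zero_div]
  exact le_antisymm (Real.sSup_nonpos fun r hr ↦ (hzero r hr).le)
    (Real.sSup_nonneg fun r hr ↦ (hzero r hr).ge)

variable {b : X →L[ℝ] M →L[ℝ] ℝ} {Xh : Submodule ℝ X} {Mh : Submodule ℝ M} {βh : ℝ}

theorem norm_le_of_infSup (hβh : 0 < βh)
    (hinfsup : ∀ q ∈ Mh, βh * ‖q‖ ≤ restrictedDualNorm Xh (b · q))
    {q : M} (hq : q ∈ Mh) {f : X → ℝ} (hf : ∀ v ∈ Xh, b v q = f v) :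
    ‖q‖ ≤ 1 / βh * restrictedDualNorm Xh f := by
  rw [one_div_mul_eq_div, le_div_iff₀ hβh, mul_comm, ← restrictedDualNorm_congr hf]
  exact hinfsup q hq

theorem eq_of_infSup (hβh : 0 < βh)
    (hinfsup : ∀ q ∈ Mh, βh * ‖q‖ ≤ restrictedDualNorm Xh (b · q))
    {q q' : M} (hq : q ∈ Mh) (hq' : q' ∈ Mh) (h : ∀ v ∈ Xh, b v q = b v q') : q = q' := by
  have hdiff : ‖q - q'‖ ≤ 1 / βh * restrictedDualNorm Xh 0 :=
    norm_le_of_infSup hβh hinfsup (Mh.sub_mem hq hq') fun v hv ↦ by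
      rw [map_sub, h v hv, sub_self, Pi.zero_apply]
  rw [restrictedDualNorm_eq_zero (f := 0) fun _ _ ↦ rfl, mul_zero] at hdiff
  exact sub_eq_zero.mp (norm_le_zero_iff.mp hdiff)

end InfSup

theorem discrete_multiplier_exists_unique_general
    {X M : Type*} [NormedAddCommGroup X] [InnerProductSpace ℝ X]
    [NormedAddCommGroup M] [NormedSpace ℝ M]
    (b : X →L[ℝ] M →L[ℝ] ℝ)
    (Xh : Submodule ℝ X) (Mh : Submodule ℝ M)
    [FiniteDimensional ℝ Xh]
    (βh : ℝ) (hβh : 0 < βh)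
    (hinfsup : ∀ q ∈ Mh, βh * ‖q‖ ≤ sSup {r : ℝ | ∃ v ∈ Xh, v ≠ 0 ∧ r = b v q / ‖v‖})
    (L : X →L[ℝ] ℝ)
    (hLker : ∀ v ∈ Xh, (∀ μ ∈ Mh, b v μ = 0) → L v = 0) :
    ∃ l : M, (l ∈ Mh ∧ ∀ v ∈ Xh, b v l = L v) ∧
      ‖l‖ ≤ (1 / βh) * sSup {r : ℝ | ∃ v ∈ Xh, v ≠ 0 ∧ r = L v / ‖v‖} ∧
      ∀ l' : M, (l' ∈ Mh ∧ ∀ v ∈ Xh, b v l' = L v) → l' = l := by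
  let bh : Xh →ₗ[ℝ] Mh →ₗ[ℝ] ℝ := b.toLinearMap₁₂.compl₁₂ Xh.subtype Mh.subtype
  have hker : ker bh ≤ ker ((L : X →ₗ[ℝ] ℝ) ∘ₗ Xh.subtype) := fun v hv ↦
    hLker v v.2 fun μ hμ ↦ LinearMap.congr_fun hv ⟨μ, hμ⟩
  obtain ⟨l, hl⟩ := mem_range_flip_of_ker_le bh hker
  have hsol : ∀ v ∈ Xh, b v l = L v := fun v hv ↦ LinearMap.congr_fun hl ⟨v, hv⟩
  refine ⟨l, ⟨l.2, hsol⟩, norm_le_of_infSup hβh hinfsup l.2 hsol, ?_⟩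
  rintro l' ⟨hl'M, hl'⟩
  exact eq_of_infSup hβh hinfsup hl'M l.2 fun v hv ↦ (hl' v hv).trans (hsol v hv).symm

/-- If `b` satisfies the discrete inf-sup condition on
`X_h × M_h` with constant `β_h` and `L ∈ X'` vanishes on the discrete kernel
`V_h`, then there is a unique `λ̃_h ∈ M_h` with `b(v,λ̃_h) = ⟨L,v⟩` for all
`v ∈ X_h`, and `‖λ̃_h‖ ≤ (1/β_h)·sup_{v∈X_h}⟨L,v⟩/‖v‖`. -/
theorem discrete_multiplier_exists_unique
    {X M : Type*} [NormedAddCommGroup X] [InnerProductSpace ℝ X] [CompleteSpace X]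
    [NormedAddCommGroup M] [NormedSpace ℝ M]
    (b : X →L[ℝ] M →L[ℝ] ℝ)
    (Xh : Submodule ℝ X) (Mh : Submodule ℝ M)
    [FiniteDimensional ℝ Xh] [FiniteDimensional ℝ Mh]
    (βh : ℝ) (hβh : 0 < βh)
    (hinfsup : ∀ q ∈ Mh, βh * ‖q‖ ≤ sSup {r : ℝ | ∃ v ∈ Xh, v ≠ 0 ∧ r = b v q / ‖v‖})
    (L : X →L[ℝ] ℝ)
    (hLker : ∀ v ∈ Xh, (∀ μ ∈ Mh, b v μ = 0) → L v = 0) :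
    ∃ l : M, (l ∈ Mh ∧ ∀ v ∈ Xh, b v l = L v) ∧
      ‖l‖ ≤ (1 / βh) * sSup {r : ℝ | ∃ v ∈ Xh, v ≠ 0 ∧ r = L v / ‖v‖} ∧
      ∀ l' : M, (l' ∈ Mh ∧ ∀ v ∈ Xh, b v l' = L v) → l' = l :=
  discrete_multiplier_exists_unique_general b Xh Mh βh hβh hinfsup L hLker
end
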